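/- arXiv:1901.06148 — 4 statements merged into one kernel-verified Lean document; each statement's English description precedes it below -/
import Mathlib

section
/- Let (Ω,F,P) be a probability space, let G ⊆ F be a sub-σ-algebra, let E be a complete separable normed real vector space, and let q ∈ [1,∞). Let Y : Ω → E be Bochner integrable, let X̂ : Ω → E be a strongly measurable map, and let M := E[Y | G] denote the conditional expectation of Y given G. Assume that the E-valued random variables Y − X̂ and 2M − Y − X̂ are identically distributed. Then (E[‖Y − X̂‖_E^q])^{1/q} ≥ (E[‖Y − M‖_E^q])^{1/q}. -/
open MeasureTheory ProbabilityTheory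
open scoped ENNReal

/-!
Write `A = Y - X̂` and `B = 2M - Y - X̂`. Then `Y - M = (A - B) / 2`, so by Minkowski
`‖Y - M‖_q ≤ (‖A‖_q + ‖B‖_q) / 2`, and `‖B‖_q = ‖A‖_q` since `A` and `B` have the same law.
-/

namespace ProbabilityTheory.IdentDistrib

variable {Ω E : Type*} {mΩ : MeasurableSpace Ω} {μ : Measure Ω}
  [NormedAddCommGroup E] [TopologicalSpace.SeparableSpace E] [MeasurableSpace E] [BorelSpace E]
  {f g : Ω → E} {p : ℝ≥0∞}

theorem eLpNorm_sub_le_two_mul (hfg : IdentDistrib f g μ μ) (hp : 1 ≤ p) :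
    eLpNorm (f - g) p μ ≤ 2 * eLpNorm f p μ :=
  haveI := UniformSpace.secondCountable_of_separable E
  calc eLpNorm (f - g) p μ
      ≤ eLpNorm f p μ + eLpNorm g p μ :=
        eLpNorm_sub_le hfg.aestronglyMeasurable_fst hfg.symm.aestronglyMeasurable_fst hp
    _ = 2 * eLpNorm f p μ := by rw [← hfg.eLpNorm_eq, two_mul]

end ProbabilityTheory.IdentDistrib

theorem condexp_optimal_reconstruction_general
    {Ω : Type*} {mF : MeasurableSpace Ω} (P : Measure Ω)
    (G : MeasurableSpace Ω)
    {E : Type*} [NormedAddCommGroup E] [NormedSpace ℝ E]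
    [TopologicalSpace.SeparableSpace E] [MeasurableSpace E] [BorelSpace E]
    (q : ℝ) (hq : 1 ≤ q)
    (Y Xhat : Ω → E)
    (hid : @ProbabilityTheory.IdentDistrib Ω Ω E mF mF _
      (fun ω => Y ω - Xhat ω)
      (fun ω => (2 : ℝ) • (P[Y|G]) ω - Y ω - Xhat ω) P P) :
    eLpNorm (fun ω => Y ω - (P[Y|G]) ω) (ENNReal.ofReal q) P ≤
      eLpNorm (fun ω => Y ω - Xhat ω) (ENNReal.ofReal q) P := by
  have h_half : (fun ω => Y ω - (P[Y|G]) ω) = (2⁻¹ : ℝ) •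
      ((fun ω => Y ω - Xhat ω) - fun ω => (2 : ℝ) • (P[Y|G]) ω - Y ω - Xhat ω) := by
    funext ω
    simp only [Pi.smul_apply, Pi.sub_apply]
    module
  calc eLpNorm (fun ω => Y ω - (P[Y|G]) ω) (ENNReal.ofReal q) P
      ≤ 2⁻¹ * (2 * eLpNorm (fun ω => Y ω - Xhat ω) (ENNReal.ofReal q) P) := by
        rw [h_half, eLpNorm_const_smul]
        gcongr
        · rw [Real.enorm_eq_ofReal (by norm_num), ENNReal.ofReal_inv_of_pos two_pos]
          simp
        · exact hid.eLpNorm_sub_le_two_mul (ENNReal.one_le_ofReal.mpr hq)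
    _ = eLpNorm (fun ω => Y ω - Xhat ω) (ENNReal.ofReal q) P := by
        rw [← mul_assoc, ENNReal.inv_mul_cancel two_ne_zero ENNReal.ofNat_ne_top, one_mul]

/-- Symmetrization step: if `Y − X̂` and `2·E[Y|G] − Y − X̂` are identically distributed,
then the conditional expectation `E[Y|G]` is at least as good a reconstruction of `Y` as
`X̂` in the `q`-th mean sense (inequality interpreted in `[0,∞]`). -/
theorem condexp_optimal_reconstruction
    {Ω : Type*} {mF : MeasurableSpace Ω} (P : Measure Ω) [IsProbabilityMeasure P]
    (G : MeasurableSpace Ω) (hG : G ≤ mF)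
    {E : Type*} [NormedAddCommGroup E] [NormedSpace ℝ E] [CompleteSpace E]
    [TopologicalSpace.SeparableSpace E] [MeasurableSpace E] [BorelSpace E]
    (q : ℝ) (hq : 1 ≤ q)
    (Y Xhat : Ω → E) (hY : Integrable Y P) (hXhat : StronglyMeasurable[mF] Xhat)
    (hid : @ProbabilityTheory.IdentDistrib Ω Ω E mF mF _
      (fun ω => Y ω - Xhat ω)
      (fun ω => (2 : ℝ) • (P[Y|G]) ω - Y ω - Xhat ω) P P) :
    eLpNorm (fun ω => Y ω - (P[Y|G]) ω) (ENNReal.ofReal q) P ≤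
      eLpNorm (fun ω => Y ω - Xhat ω) (ENNReal.ofReal q) P :=
  condexp_optimal_reconstruction_general P G q hq Y Xhat hid
end

section
/- Let T ∈ (0,∞), d, m, N ∈ ℕ, r ∈ [0,∞), θ ∈ [1,∞), K ∈ (0,∞), and let σ : [0,T] × ℝ^d → ℝ^{d×m} be a measurable function such that for all t ∈ [0,T] and x ∈ ℝ^d it holds that |σ(t,x)| ≤ K · (1 + |x|^{(r+2)/2}). Let (Ω,F,P) be a probability space and let Y : Ω → C([0,T];ℝ^d) be a measurable map into the space of continuous ℝ^d-valued functions on [0,T]. Then ‖ sup_{t∈[0,T]} | σ(t, Y(t)) − σ(t, Y(t)) / (1 + (T/N)^{1/2} · |Y(t)|^r) | ‖_{L_θ} ≤ (T/N)^{1/2} · K · ( ‖ sup_{t∈[0,T]} |Y(t)|^{r} ‖_{L_θ} + ‖ sup_{t∈[0,T]} |Y(t)|^{(3r+2)/2} ‖_{L_θ} ), where the inequality is interpreted in [0,∞]. -/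
/-!
Taming rescales `σ(t,x)` by `(1 + a)⁻¹` with `a = (T/N)^{1/2}|x|^r`, so the taming error is
`a/(1+a) · |σ(t,x)| ≤ a · K(1 + |x|^{(r+2)/2}) = (T/N)^{1/2} K (|x|^r + |x|^{(3r+2)/2})`.
Taking the supremum over `t` and then Minkowski's inequality in `L_θ` (`θ ≥ 1`) gives the bound.
The suprema along continuous paths are measurable because they may be taken over a countable
dense set of times.
-/

open MeasureTheory

lemma norm_sub_inv_one_add_smul_le {E : Type*} [SeminormedAddCommGroup E] [NormedSpace ℝ E]
    {a : ℝ} (ha : 0 ≤ a) (v : E) : ‖v - (1 + a)⁻¹ • v‖ ≤ a * ‖v‖ := by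
  have hsub : v - (1 + a)⁻¹ • v = (a / (1 + a)) • v := by
    have hfactor : a / (1 + a) = 1 - (1 + a)⁻¹ := by field_simp; ring
    rw [hfactor, sub_smul, one_smul]
  calc ‖v - (1 + a)⁻¹ • v‖ = a / (1 + a) * ‖v‖ := by
        rw [hsub, norm_smul, Real.norm_of_nonneg (by positivity)]
    _ ≤ a * ‖v‖ := by gcongr; exact div_le_self ha (by linarith)

lemma norm_sub_tamed_le_of_norm_le_polyGrowth {E : Type*} [SeminormedAddCommGroup E]
    [NormedSpace ℝ E] {c K r x : ℝ} (hc : 0 ≤ c) (hr : 0 ≤ r) (hx : 0 ≤ x) {v : E}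
    (hv : ‖v‖ ≤ K * (1 + x ^ ((r + 2) / 2))) :
    ‖v - (1 + c * x ^ r)⁻¹ • v‖ ≤ c * K * (x ^ r + x ^ ((3 * r + 2) / 2)) := by
  have hexp : (3 * r + 2) / 2 = r + (r + 2) / 2 := by ring
  have ha : 0 ≤ c * x ^ r := by positivity
  calc ‖v - (1 + c * x ^ r)⁻¹ • v‖ ≤ c * x ^ r * ‖v‖ := norm_sub_inv_one_add_smul_le ha v
    _ ≤ c * x ^ r * (K * (1 + x ^ ((r + 2) / 2))) := by gcongr
    _ = c * K * (x ^ r + x ^ ((3 * r + 2) / 2)) := by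
        rw [hexp, Real.rpow_add' hx (by rw [← hexp]; positivity)]
        ring

lemma iSup_le_mul_iSup_add_iSup {ι : Sort*} {F g h : ι → ℝ} {a : ℝ} (ha : 0 ≤ a)
    (hg : BddAbove (Set.range g)) (hh : BddAbove (Set.range h))
    (hg0 : ∀ i, 0 ≤ g i) (hh0 : ∀ i, 0 ≤ h i) (hF : ∀ i, F i ≤ a * (g i + h i)) :
    ⨆ i, F i ≤ a * ((⨆ i, g i) + ⨆ i, h i) := by
  have hgsup : 0 ≤ ⨆ i, g i := Real.iSup_nonneg hg0
  have hhsup : 0 ≤ ⨆ i, h i := Real.iSup_nonneg hh0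
  refine Real.iSup_le (fun i => (hF i).trans ?_) (by positivity)
  gcongr
  exacts [le_ciSup hg i, le_ciSup hh i]

lemma measurable_iSup_of_continuous {ι Ω : Type*} [TopologicalSpace ι]
    [TopologicalSpace.SeparableSpace ι] [MeasurableSpace Ω] {f : Ω → ι → ℝ}
    (hcont : ∀ ω, Continuous (f ω)) (hmeas : ∀ t, Measurable fun ω => f ω t) :
    Measurable fun ω => ⨆ t, f ω t := by
  obtain ⟨D, hDcount, hDdense⟩ := TopologicalSpace.exists_countable_dense ι
  have : Countable D := hDcount.to_subtype
  simp_rw [← hDdense.ciSup' (hcont _)]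
  exact Measurable.iSup fun t => hmeas t

lemma eLpNorm_le_ofReal_mul_add_of_norm_le {α E : Type*} [MeasurableSpace α] {μ : Measure α}
    [NormedAddCommGroup E] {p : ENNReal} (hp : 1 ≤ p) {f : α → E} {g h : α → ℝ} {a : ℝ}
    (ha : 0 ≤ a) (hg : AEStronglyMeasurable g μ) (hh : AEStronglyMeasurable h μ)
    (hf : ∀ x, ‖f x‖ ≤ a * (g x + h x)) :
    eLpNorm f p μ ≤ ENNReal.ofReal a * (eLpNorm g p μ + eLpNorm h p μ) :=
  calc eLpNorm f p μ ≤ eLpNorm (a • (g + h)) p μ := eLpNorm_mono_real hf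
    _ = ENNReal.ofReal a * eLpNorm (g + h) p μ := by
        rw [eLpNorm_const_smul, Real.enorm_eq_ofReal ha]
    _ ≤ ENNReal.ofReal a * (eLpNorm g p μ + eLpNorm h p μ) := by
        gcongr; exact eLpNorm_add_le hg hh hp

theorem sup_dist_tamed_sigma_Lp_bound_general
    (T : ℝ) (d m N : ℕ)
    (r θ K : ℝ) (hr : 0 ≤ r) (hθ : 1 ≤ θ) (hK : 0 < K)
    (σ : ℝ → EuclideanSpace ℝ (Fin d) → EuclideanSpace ℝ (Fin d × Fin m))
    (hσ : ∀ t ∈ Set.Icc (0 : ℝ) T, ∀ x, ‖σ t x‖ ≤ K * (1 + ‖x‖ ^ ((r + 2) / 2)))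
    {Ω : Type*} [MeasurableSpace Ω] (P : Measure Ω)
    (Y : Ω → ℝ → EuclideanSpace ℝ (Fin d))
    (hYcont : ∀ ω, ContinuousOn (Y ω) (Set.Icc 0 T))
    (hYmeas : ∀ t ∈ Set.Icc (0 : ℝ) T, Measurable fun ω => Y ω t) :
    eLpNorm (fun ω => ⨆ t : Set.Icc (0 : ℝ) T,
        ‖σ ↑t (Y ω ↑t) - (1 + Real.sqrt (T / N) * ‖Y ω ↑t‖ ^ r)⁻¹ • σ ↑t (Y ω ↑t)‖)
        (ENNReal.ofReal θ) P ≤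
      ENNReal.ofReal (Real.sqrt (T / N) * K) *
        (eLpNorm (fun ω => ⨆ t : Set.Icc (0 : ℝ) T, ‖Y ω ↑t‖ ^ r) (ENNReal.ofReal θ) P +
          eLpNorm (fun ω => ⨆ t : Set.Icc (0 : ℝ) T, ‖Y ω ↑t‖ ^ ((3 * r + 2) / 2))
            (ENNReal.ofReal θ) P) := by
  have hc : 0 ≤ Real.sqrt (T / N) := Real.sqrt_nonneg _
  have hpow_cont : ∀ ω {p : ℝ}, 0 ≤ p → Continuous fun t : Set.Icc (0 : ℝ) T => ‖Y ω t‖ ^ p :=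
    fun ω _ hp => (Real.continuous_rpow_const hp).comp (hYcont ω).domRestrict.norm
  have hsup_meas : ∀ {p : ℝ}, 0 ≤ p →
      AEStronglyMeasurable (fun ω => ⨆ t : Set.Icc (0 : ℝ) T, ‖Y ω t‖ ^ p) P := fun hp =>
    (measurable_iSup_of_continuous (fun ω => hpow_cont ω hp)
      fun t => (hYmeas t t.2).norm.pow_const _).aestronglyMeasurable
  have hexp : 0 ≤ (3 * r + 2) / 2 := by positivity
  refine eLpNorm_le_ofReal_mul_add_of_norm_le (ENNReal.one_le_ofReal.2 hθ) (by positivity)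
    (hsup_meas hr) (hsup_meas hexp) fun ω => ?_
  rw [Real.norm_of_nonneg (Real.iSup_nonneg fun _ => norm_nonneg _)]
  exact iSup_le_mul_iSup_add_iSup (by positivity) (isCompact_range (hpow_cont ω hr)).bddAbove
    (isCompact_range (hpow_cont ω hexp)).bddAbove (fun _ => by positivity) (fun _ => by positivity)
    fun t => norm_sub_tamed_le_of_norm_le_polyGrowth hc hr (norm_nonneg _) (hσ t t.2 _)

/-- Estimate for the sup distance between a diffusion coefficient of polynomial growth
and its tamed version along a path-valued random variable:
`‖sup_t |σ(t,Y(t)) − σ(t,Y(t))/(1+(T/N)^{1/2}|Y(t)|^r)|‖_{L_θ}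
  ≤ (T/N)^{1/2} · K · (‖sup_t |Y(t)|^r‖_{L_θ} + ‖sup_t |Y(t)|^{(3r+2)/2}‖_{L_θ})`,
interpreted in `[0,∞]`. -/
theorem sup_dist_tamed_sigma_Lp_bound
    (T : ℝ) (hT : 0 < T) (d m N : ℕ) (hd : 0 < d) (hm : 0 < m) (hN : 0 < N)
    (r θ K : ℝ) (hr : 0 ≤ r) (hθ : 1 ≤ θ) (hK : 0 < K)
    (σ : ℝ → EuclideanSpace ℝ (Fin d) → EuclideanSpace ℝ (Fin d × Fin m))
    (hσmeas : Measurable fun p : ℝ × EuclideanSpace ℝ (Fin d) => σ p.1 p.2)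
    (hσ : ∀ t ∈ Set.Icc (0 : ℝ) T, ∀ x, ‖σ t x‖ ≤ K * (1 + ‖x‖ ^ ((r + 2) / 2)))
    {Ω : Type*} [MeasurableSpace Ω] (P : Measure Ω) [IsProbabilityMeasure P]
    (Y : Ω → ℝ → EuclideanSpace ℝ (Fin d))
    (hYcont : ∀ ω, ContinuousOn (Y ω) (Set.Icc 0 T))
    (hYmeas : ∀ t ∈ Set.Icc (0 : ℝ) T, Measurable fun ω => Y ω t) :
    eLpNorm (fun ω => ⨆ t : Set.Icc (0 : ℝ) T,
        ‖σ ↑t (Y ω ↑t) - (1 + Real.sqrt (T / N) * ‖Y ω ↑t‖ ^ r)⁻¹ • σ ↑t (Y ω ↑t)‖)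
        (ENNReal.ofReal θ) P ≤
      ENNReal.ofReal (Real.sqrt (T / N) * K) *
        (eLpNorm (fun ω => ⨆ t : Set.Icc (0 : ℝ) T, ‖Y ω ↑t‖ ^ r) (ENNReal.ofReal θ) P +
          eLpNorm (fun ω => ⨆ t : Set.Icc (0 : ℝ) T, ‖Y ω ↑t‖ ^ ((3 * r + 2) / 2))
            (ENNReal.ofReal θ) P) :=
  sup_dist_tamed_sigma_Lp_bound_general T d m N r θ K hr hθ hK σ hσ P Y hYcont hYmeas
end

section
/- Let T ∈ (0,∞), d, m ∈ ℕ, a ∈ (1,∞), r ∈ [0,∞), and let μ : [0,T] × ℝ^d → ℝ^d and σ : [0,T] × ℝ^d → ℝ^{d×m} be functions. Assume there exists C₁ ∈ (0,∞) such that for all t ∈ [0,T] and all x, y ∈ ℝ^d it holds that 2·(x − y)^⊤·(μ(t,x) − μ(t,y)) + (a − 1)·|σ(t,x) − σ(t,y)|² ≤ C₁·|x − y|², and assume there exists C₂ ∈ (0,∞) such that for all t ∈ [0,T] and all x, y ∈ ℝ^d it holds that |μ(t,x) − μ(t,y)| ≤ C₂·|x − y|·(1 + |x|^r + |y|^r).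 Then there exists C ∈ (0,∞) such that for all t ∈ [0,T] and all x, y ∈ ℝ^d it holds that |σ(t,x) − σ(t,y)| ≤ C·|x − y|·(1 + |x|^{r/2} + |y|^{r/2}). -/
open scoped RealInnerProductSpace

/-!
Write `Δx = x - y`, `Δμ = μ t x - μ t y`, `Δσ = σ t x - σ t y` and `P = 1 + |x|^r + |y|^r`.
By Cauchy–Schwarz, the monotonicity condition gives
`(a - 1) |Δσ|² ≤ C₁ |Δx|² + 2 |Δx| |Δμ| ≤ (C₁ + 2 C₂) |Δx|² P`,
and `P ≤ (1 + |x|^{r/2} + |y|^{r/2})²`, so taking square roots yields the bound with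
`C = √((C₁ + 2 C₂) / (a - 1))`.
-/

theorem Real.one_add_rpow_add_rpow_le_sq {p q : ℝ} (hp : 0 ≤ p) (hq : 0 ≤ q) (r : ℝ) :
    1 + p ^ r + q ^ r ≤ (1 + p ^ (r / 2) + q ^ (r / 2)) ^ 2 := by
  have sq_rpow_half {z : ℝ} (hz : 0 ≤ z) : (z ^ (r / 2)) ^ 2 = z ^ r := by
    rw [← Real.rpow_two, ← Real.rpow_mul hz, div_mul_cancel₀ r two_ne_zero]
  have hp' := Real.rpow_nonneg hp (r / 2)
  have hq' := Real.rpow_nonneg hq (r / 2)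
  nlinarith [sq_rpow_half hp, sq_rpow_half hq, mul_nonneg hp' hq']

section Monotonicity

variable {E F : Type*} [NormedAddCommGroup E] [InnerProductSpace ℝ E] [SeminormedAddCommGroup F]
  {u v : E} {s : F} {a C₁ C₂ P : ℝ}

theorem sub_one_mul_sq_norm_le_of_inner_add_le (hC₁ : 0 ≤ C₁) (hP : 1 ≤ P)
    (hmon : 2 * ⟪u, v⟫ + (a - 1) * ‖s‖ ^ 2 ≤ C₁ * ‖u‖ ^ 2) (hv : ‖v‖ ≤ C₂ * ‖u‖ * P) :
    (a - 1) * ‖s‖ ^ 2 ≤ (C₁ + 2 * C₂) * ‖u‖ ^ 2 * P := by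
  have hcs : -(‖u‖ * ‖v‖) ≤ ⟪u, v⟫ := neg_le_of_abs_le (abs_real_inner_le_norm u v)
  have hC₁P : C₁ * ‖u‖ ^ 2 ≤ C₁ * ‖u‖ ^ 2 * P :=
    le_mul_of_one_le_right (by positivity) hP
  have huv : ‖u‖ * ‖v‖ ≤ C₂ * ‖u‖ ^ 2 * P := by
    calc ‖u‖ * ‖v‖ ≤ ‖u‖ * (C₂ * ‖u‖ * P) := mul_le_mul_of_nonneg_left hv (norm_nonneg u)
      _ = C₂ * ‖u‖ ^ 2 * P := by ring
  linarith

theorem norm_le_of_inner_add_le {Q : ℝ} (ha : 1 < a) (hC₁ : 0 ≤ C₁) (hC₂ : 0 ≤ C₂) (hP : 1 ≤ P)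
    (hPQ : P ≤ Q ^ 2) (hQ : 0 ≤ Q)
    (hmon : 2 * ⟪u, v⟫ + (a - 1) * ‖s‖ ^ 2 ≤ C₁ * ‖u‖ ^ 2) (hv : ‖v‖ ≤ C₂ * ‖u‖ * P) :
    ‖s‖ ≤ √((C₁ + 2 * C₂) / (a - 1)) * ‖u‖ * Q := by
  have ha' : 0 < a - 1 := sub_pos.2 ha
  have hsq : ‖s‖ ^ 2 ≤ (C₁ + 2 * C₂) / (a - 1) * (‖u‖ * Q) ^ 2 := by
    calc ‖s‖ ^ 2 ≤ (C₁ + 2 * C₂) * ‖u‖ ^ 2 * P / (a - 1) := by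
          rw [le_div_iff₀ ha', mul_comm]
          exact sub_one_mul_sq_norm_le_of_inner_add_le hC₁ hP hmon hv
      _ ≤ (C₁ + 2 * C₂) * ‖u‖ ^ 2 * Q ^ 2 / (a - 1) := by gcongr
      _ = (C₁ + 2 * C₂) / (a - 1) * (‖u‖ * Q) ^ 2 := by ring
  calc ‖s‖ = √(‖s‖ ^ 2) := (Real.sqrt_sq (norm_nonneg s)).symm
    _ ≤ √((C₁ + 2 * C₂) / (a - 1) * (‖u‖ * Q) ^ 2) := Real.sqrt_le_sqrt hsq
    _ = √((C₁ + 2 * C₂) / (a - 1)) * ‖u‖ * Q := by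
        rw [Real.sqrt_mul' _ (sq_nonneg _), Real.sqrt_sq (by positivity), mul_assoc]

end Monotonicity

theorem sigma_polyLipschitz_of_monotonicity_and_mu_polyLipschitz_general
    (T : ℝ) (d m : ℕ)
    (a : ℝ) (ha : 1 < a) (r : ℝ)
    (μ : ℝ → EuclideanSpace ℝ (Fin d) → EuclideanSpace ℝ (Fin d))
    (σ : ℝ → EuclideanSpace ℝ (Fin d) → EuclideanSpace ℝ (Fin d × Fin m))
    (C₁ : ℝ) (hC₁ : 0 < C₁)
    (h1 : ∀ t ∈ Set.Icc (0 : ℝ) T, ∀ x y,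
      2 * ⟪x - y, μ t x - μ t y⟫ + (a - 1) * ‖σ t x - σ t y‖ ^ 2 ≤ C₁ * ‖x - y‖ ^ 2)
    (C₂ : ℝ) (hC₂ : 0 < C₂)
    (h2 : ∀ t ∈ Set.Icc (0 : ℝ) T, ∀ x y,
      ‖μ t x - μ t y‖ ≤ C₂ * ‖x - y‖ * (1 + ‖x‖ ^ r + ‖y‖ ^ r)) :
    ∃ C : ℝ, 0 < C ∧ ∀ t ∈ Set.Icc (0 : ℝ) T, ∀ x y,
      ‖σ t x - σ t y‖ ≤ C * ‖x - y‖ * (1 + ‖x‖ ^ (r / 2) + ‖y‖ ^ (r / 2)) := by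
  refine ⟨√((C₁ + 2 * C₂) / (a - 1)), Real.sqrt_pos.2 (div_pos (by positivity) (sub_pos.2 ha)),
    fun t ht x y => ?_⟩
  have hxr := Real.rpow_nonneg (norm_nonneg x) r
  have hyr := Real.rpow_nonneg (norm_nonneg y) r
  exact norm_le_of_inner_add_le ha hC₁.le hC₂.le (by linarith)
    (Real.one_add_rpow_add_rpow_le_sq (norm_nonneg x) (norm_nonneg y) r) (by positivity)
    (h1 t ht x y) (h2 t ht x y)

/-- The monotonicity condition (M_a) together with Assumption (pL_r^μ) implies
Assumption (pL_{r/2}^σ): the diffusion coefficient is Lipschitz in the state variable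
with a Lipschitz bound growing like `1 + |x|^{r/2} + |y|^{r/2}`. -/
theorem sigma_polyLipschitz_of_monotonicity_and_mu_polyLipschitz
    (T : ℝ) (hT : 0 < T) (d m : ℕ) (hd : 0 < d) (hm : 0 < m)
    (a : ℝ) (ha : 1 < a) (r : ℝ) (hr : 0 ≤ r)
    (μ : ℝ → EuclideanSpace ℝ (Fin d) → EuclideanSpace ℝ (Fin d))
    (σ : ℝ → EuclideanSpace ℝ (Fin d) → EuclideanSpace ℝ (Fin d × Fin m))
    (C₁ : ℝ) (hC₁ : 0 < C₁)
    (h1 : ∀ t ∈ Set.Icc (0 : ℝ) T, ∀ x y,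
      2 * ⟪x - y, μ t x - μ t y⟫ + (a - 1) * ‖σ t x - σ t y‖ ^ 2 ≤ C₁ * ‖x - y‖ ^ 2)
    (C₂ : ℝ) (hC₂ : 0 < C₂)
    (h2 : ∀ t ∈ Set.Icc (0 : ℝ) T, ∀ x y,
      ‖μ t x - μ t y‖ ≤ C₂ * ‖x - y‖ * (1 + ‖x‖ ^ r + ‖y‖ ^ r)) :
    ∃ C : ℝ, 0 < C ∧ ∀ t ∈ Set.Icc (0 : ℝ) T, ∀ x y,
      ‖σ t x - σ t y‖ ≤ C * ‖x - y‖ * (1 + ‖x‖ ^ (r / 2) + ‖y‖ ^ (r / 2)) :=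
  sigma_polyLipschitz_of_monotonicity_and_mu_polyLipschitz_general T d m a ha r μ σ C₁ hC₁ h1 C₂ hC₂
    h2
end

section
/- For every a ∈ [2,6] there exists C ∈ (0,∞) such that for all x, y ∈ ℝ it holds that 2·(x − y)·(5·x·(1 − |x|) − 5·y·(1 − |y|)) + (a − 1)·(|x|^{3/2} − |y|^{3/2})² ≤ C·(x − y)². -/
/-! Expanding the drift gives `2 (x - y) (μ x - μ y) = 10 (x - y)² - 10 (x - y) (x|x| - y|y|)`,
so it suffices that the diffusion increment is dominated by the monotone part of the drift:
`(|x|^{3/2} - |y|^{3/2})² ≤ 2 (x - y) (x|x| - y|y|)`. Writing `|x| = u²`, `|y| = v²` this becomes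
a polynomial inequality in `u, v ≥ 0`, and then `(a - 1) ≤ 5` gives the claim with `C = 10`. -/

lemma sq_sub_pow_three_le_mul_sub {u v : ℝ} (hu : 0 ≤ u) (hv : 0 ≤ v) :
    (u ^ 3 - v ^ 3) ^ 2 ≤ 2 * (u ^ 2 - v ^ 2) * (u ^ 4 - v ^ 4) := by
  nlinarith [sq_nonneg (u - v), mul_nonneg hu hv,
    mul_nonneg (sq_nonneg (u - v)) (sq_nonneg (u - v)),
    mul_nonneg (sq_nonneg (u - v)) (mul_nonneg hu hv)]

lemma sq_sub_pow_three_le_mul_add {u v : ℝ} (hu : 0 ≤ u) (hv : 0 ≤ v) :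
    (u ^ 3 - v ^ 3) ^ 2 ≤ 2 * (u ^ 2 + v ^ 2) * (u ^ 4 + v ^ 4) := by
  nlinarith [pow_nonneg hu 3, pow_nonneg hv 3, mul_nonneg (sq_nonneg u) (sq_nonneg v),
    mul_nonneg (pow_nonneg hu 4) (sq_nonneg v), mul_nonneg (pow_nonneg hv 4) (sq_nonneg u)]

lemma sq_rpow_three_halves {t : ℝ} (ht : 0 ≤ t) : (t ^ 2) ^ ((3 : ℝ) / 2) = t ^ 3 := by
  rw [Real.rpow_div_two_eq_sqrt _ (sq_nonneg t), Real.sqrt_sq ht]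
  norm_cast

lemma sq_sub_abs_rpow_three_halves_le (x y : ℝ) :
    (|x| ^ ((3 : ℝ) / 2) - |y| ^ ((3 : ℝ) / 2)) ^ 2 ≤ 2 * (x - y) * (x * |x| - y * |y|) := by
  wlog hx : 0 ≤ x generalizing x y
  · convert this (-x) (-y) (by linarith) using 1 <;> simp only [abs_neg]; ring
  obtain ⟨u, hu, rfl⟩ : ∃ u, 0 ≤ u ∧ x = u ^ 2 := ⟨√x, Real.sqrt_nonneg x, (Real.sq_sqrt hx).symm⟩
  obtain ⟨v, hv, hyv⟩ : ∃ v, 0 ≤ v ∧ |y| = v ^ 2 :=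
    ⟨√|y|, Real.sqrt_nonneg _, (Real.sq_sqrt (abs_nonneg y)).symm⟩
  rw [hyv, abs_of_nonneg (sq_nonneg u), sq_rpow_three_halves hu, sq_rpow_three_halves hv]
  rcases le_total 0 y with hy | hy
  · obtain rfl : y = v ^ 2 := by rw [← hyv, abs_of_nonneg hy]
    convert sq_sub_pow_three_le_mul_sub hu hv using 1
    ring
  · obtain rfl : y = -v ^ 2 := by rw [← hyv, abs_of_nonpos hy, neg_neg]
    convert sq_sub_pow_three_le_mul_add hu hv using 1
    ring

/-- Verification of the monotonicity condition (M_a), `a ∈ [2,6]`, for the coefficients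
`μ(x) = 5·x·(1 − |x|)` and `σ(x) = |x|^{3/2}` of the Heston-3/2-model SDE. -/
theorem heston_monotonicity (a : ℝ) (ha : a ∈ Set.Icc (2 : ℝ) 6) :
    ∃ C : ℝ, 0 < C ∧ ∀ x y : ℝ,
      2 * (x - y) * (5 * x * (1 - |x|) - 5 * y * (1 - |y|)) +
          (a - 1) * (|x| ^ ((3 : ℝ) / 2) - |y| ^ ((3 : ℝ) / 2)) ^ 2 ≤ C * (x - y) ^ 2 := by
  refine ⟨10, by norm_num, fun x y => ?_⟩
  set S := (|x| ^ ((3 : ℝ) / 2) - |y| ^ ((3 : ℝ) / 2)) ^ 2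
  set D := (x - y) * (x * |x| - y * |y|)
  have hS : S ≤ 2 * D := by simpa only [mul_assoc] using sq_sub_abs_rpow_three_halves_le x y
  calc 2 * (x - y) * (5 * x * (1 - |x|) - 5 * y * (1 - |y|)) + (a - 1) * S
      = 10 * (x - y) ^ 2 - 10 * D + (a - 1) * S := by ring
    _ ≤ 10 * (x - y) ^ 2 - 10 * D + 5 * S := by gcongr; linarith [ha.2]
    _ ≤ 10 * (x - y) ^ 2 := by linarith
end
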